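/- arXiv:1001.0149 — 2 statements merged into one kernel-verified Lean document; each statement's English description precedes it below -/
import Mathlib

section
/- For any two level-L boxes I, J of the 2D periodic hierarchical partition with I ∉ NL(J), there exists a unique level l with 3 ≤ l ≤ L and unique boxes I', J' at level l such that I ⊆ I', J ⊆ J', and I' ∈ IL(J'). -/
/-- Torus adjacency (or equality) of coordinates in `ZMod m`. -/
def nbr (m : ℕ) (a b : ZMod m) : Prop := a = b ∨ a = b + 1 ∨ a + 1 = b

/-- The neighbor-list relation `I ∈ NL(J)` for boxes of the level with `m × m` boxes of the
periodic unit square, boxes being indexed by pairs in `ZMod m × ZMod m`: the boxes coincide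
or are torus-adjacent. -/
def NLrel (m : ℕ) (I J : ZMod m × ZMod m) : Prop := nbr m I.1 J.1 ∧ nbr m I.2 J.2

/-- The parent, at level `l - 1`, of a box at level `l`. -/
def parentBox (l : ℕ) (I : ZMod (2 ^ l) × ZMod (2 ^ l)) :
    ZMod (2 ^ (l - 1)) × ZMod (2 ^ (l - 1)) :=
  (((I.1.val / 2 : ℕ) : ZMod (2 ^ (l - 1))), ((I.2.val / 2 : ℕ) : ZMod (2 ^ (l - 1))))

/-- The interaction-list relation `I ∈ IL(J)` at level `l`: at level `3` it consists of all
level-3 boxes not in `NL(J)`; at levels `l > 3` it consists of the boxes whose parent is in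
`NL(parent J)` but which are themselves not in `NL(J)`. -/
def ILrel (l : ℕ) (I J : ZMod (2 ^ l) × ZMod (2 ^ l)) : Prop :=
  ¬ NLrel (2 ^ l) I J ∧ (l = 3 ∨ NLrel (2 ^ (l - 1)) (parentBox l I) (parentBox l J))

/-- The ancestor, at level `l ≤ L`, of a level-`L` box. -/
def ancBox (L l : ℕ) (I : ZMod (2 ^ L) × ZMod (2 ^ L)) : ZMod (2 ^ l) × ZMod (2 ^ l) :=
  (((I.1.val / 2 ^ (L - l) : ℕ) : ZMod (2 ^ l)), ((I.2.val / 2 ^ (L - l) : ℕ) : ZMod (2 ^ l)))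

/-!
Let `P l` say that the level-`l` ancestors of `I` and `J` are neighbours. Halving the indices of
two torus-adjacent boxes gives torus-adjacent (or equal) boxes, so `P l` implies `P (l - 1)`;
and `P L` fails. Hence `P` fails exactly on a final segment `[l₀, L]` of the levels, and
`I' ∈ IL(J')` at level `l` says precisely that `l` is the first level of that segment
(`¬ P l`, and `l = 3` or `P (l - 1)`).
-/

lemma existsUnique_boundary_of_step {P : ℕ → Prop} {a L : ℕ} (haL : a ≤ L)
    (hstep : ∀ l, a < l → l ≤ L → P l → P (l - 1)) (hL : ¬ P L) :
    ∃! l, (a ≤ l ∧ l ≤ L) ∧ ¬ P l ∧ (l = a ∨ P (l - 1)) := by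
  classical
  have hex : ∃ l, a ≤ l ∧ ¬ P l := ⟨L, haL, hL⟩
  obtain ⟨hal₀, hPl₀⟩ := Nat.find_spec hex
  have hl₀L : Nat.find hex ≤ L := Nat.find_min' hex ⟨haL, hL⟩
  have not_P_iff : ∀ l, a ≤ l → l ≤ L → (¬ P l ↔ Nat.find hex ≤ l) := by
    refine fun l hal hlL => ⟨fun hPl => Nat.find_min' hex ⟨hal, hPl⟩, fun hle => ?_⟩
    induction l, hle using Nat.le_induction with
    | base => exact hPl₀
    | succ n hn ih => exact fun hP => ih (by omega) (by omega) (hstep (n + 1) (by omega) hlL hP)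
  refine ⟨Nat.find hex, ⟨⟨hal₀, hl₀L⟩, hPl₀, ?_⟩, ?_⟩
  · by_cases h : Nat.find hex = a
    · exact Or.inl h
    · refine Or.inr (by_contra fun hP => ?_)
      have := (not_P_iff _ (by omega) (by omega)).1 hP
      omega
  · rintro l ⟨⟨hal, hlL⟩, hPl, hprev⟩
    have hle := (not_P_iff l hal hlL).1 hPl
    rcases hprev with rfl | hP
    · omega
    · by_contra hne
      exact (not_P_iff (l - 1) (by omega) (by omega)).2 (by omega) hP

lemma nbr_natCast_iff {m p q : ℕ} (hp : p < m) (hq : q < m) :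
    nbr m (p : ZMod m) (q : ZMod m) ↔
      p = q ∨ p = q + 1 ∨ p + 1 = q ∨ (p = 0 ∧ q + 1 = m) ∨ (q = 0 ∧ p + 1 = m) := by
  have mod_succ : ∀ r < m, (r + 1) % m = if r + 1 = m then 0 else r + 1 := fun r hr => by
    split_ifs with h
    · rw [h, Nat.mod_self]
    · exact Nat.mod_eq_of_lt (by omega)
  simp only [nbr, ← Nat.cast_succ, ZMod.natCast_eq_natCast_iff', Nat.mod_eq_of_lt hp,
    Nat.mod_eq_of_lt hq, mod_succ p hp, mod_succ q hq]
  split_ifs <;> omega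

lemma nbr_half {n m : ℕ} [NeZero n] (hn : n = 2 * m) {a b : ZMod n} (h : nbr n a b) :
    nbr m ((a.val / 2 : ℕ) : ZMod m) ((b.val / 2 : ℕ) : ZMod m) := by
  rw [← ZMod.natCast_zmod_val a, ← ZMod.natCast_zmod_val b,
    nbr_natCast_iff (ZMod.val_lt a) (ZMod.val_lt b)] at h
  have := ZMod.val_lt a
  have := ZMod.val_lt b
  rw [nbr_natCast_iff (by omega) (by omega)]
  omega

lemma NLrel_parentBox {l : ℕ} (hl : 1 ≤ l) {I J : ZMod (2 ^ l) × ZMod (2 ^ l)}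
    (h : NLrel (2 ^ l) I J) : NLrel (2 ^ (l - 1)) (parentBox l I) (parentBox l J) := by
  have hpow : 2 ^ l = 2 * 2 ^ (l - 1) := by rw [← pow_succ']; congr 1; omega
  exact ⟨nbr_half hpow h.1, nbr_half hpow h.2⟩

lemma ancBox_self (L : ℕ) (X : ZMod (2 ^ L) × ZMod (2 ^ L)) : ancBox L L X = X := by
  simp [ancBox]

lemma parentBox_ancBox {L l : ℕ} (hl : 1 ≤ l) (hlL : l ≤ L) (X : ZMod (2 ^ L) × ZMod (2 ^ L)) :
    parentBox l (ancBox L l X) = ancBox L (l - 1) X := by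
  have div_lt : ∀ x : ZMod (2 ^ L), x.val / 2 ^ (L - l) < 2 ^ l := fun x =>
    Nat.div_lt_of_lt_mul <| by rw [← pow_add, Nat.sub_add_cancel hlL]; exact ZMod.val_lt x
  have hpow : 2 ^ (L - l) * 2 = 2 ^ (L - (l - 1)) := by rw [← pow_succ]; congr 1; omega
  simp only [parentBox, ancBox, ZMod.val_natCast, Nat.mod_eq_of_lt (div_lt _),
    Nat.div_div_eq_div_mul, hpow]

/-- For any two level-`L` boxes `I ∉ NL(J)` there is a unique level `l` with `3 ≤ l ≤ L`
such that the (unique) ancestors `I' ⊇ I`, `J' ⊇ J` at level `l` satisfy `I' ∈ IL(J')`. -/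
theorem stmt_10 (L : ℕ) (hL : 3 ≤ L) (I J : ZMod (2 ^ L) × ZMod (2 ^ L))
    (h : ¬ NLrel (2 ^ L) I J) :
    ∃! l : ℕ, (3 ≤ l ∧ l ≤ L) ∧ ILrel l (ancBox L l I) (ancBox L l J) := by
  set P : ℕ → Prop := fun l => NLrel (2 ^ l) (ancBox L l I) (ancBox L l J)
  have hstep : ∀ l, 3 < l → l ≤ L → P l → P (l - 1) := fun l hl hlL hP => by
    simpa only [P, parentBox_ancBox (by omega) hlL] using NLrel_parentBox (by omega) hP
  have hPL : ¬ P L := by simpa only [P, ancBox_self] using h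
  refine (existsUnique_congr fun l => and_congr_right fun hl => ?_).2
    (existsUnique_boundary_of_step hL hstep hPL)
  simp only [ILrel, P, parentBox_ancBox (by omega : 1 ≤ l) hl.2]
end

section
/- If J and J' are two distinct boxes at level l ≥ 4 belonging to the same set S_{pq} (indices congruent mod 8), then NL(J) ∪ IL(J) and NL(J') ∪ IL(J') are disjoint. Consequently, for a matrix A whose block A(I,J) is nonzero only when I ∈ NL(J) ∪ IL(J), the products A·R_J for random matrices R_J supported on distinct boxes J ∈ S_{pq} have disjoint supports and can be recovered from a single application of A to the sum of the R_J. -/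
/-!
If `I ∈ NL(J) ∪ IL(J)`, each coordinate of `I` lies within torus distance `3` of that of `J`
(an interaction box has a parent adjacent to `J`'s parent, and halving loses at most one on each
side). Two boxes `J`, `J'` sharing such an `I` are therefore within distance `6` in each
coordinate; as `8 ∣ 2 ^ l`, congruence modulo `8` then forces `J = J'`. The matrix statement
follows because `A * R_B` vanishes on the rows of boxes outside `NL(B) ∪ IL(B)`.
-/

open Matrix
open scoped Classical

/-- The level-`l` box containing a grid point of the periodic `2^LM × 2^LM` grid. -/
def gridBox (LM l : ℕ) (p : ZMod (2 ^ LM) × ZMod (2 ^ LM)) :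
    ZMod (2 ^ l) × ZMod (2 ^ l) :=
  (((p.1.val / 2 ^ (LM - l) : ℕ) : ZMod (2 ^ l)), ((p.2.val / 2 ^ (LM - l) : ℕ) : ZMod (2 ^ l)))

section TorusClose
variable {n : ℕ}

def TorusClose (k : ℕ) (x y : ZMod n) : Prop := ∃ d : ℤ, |d| ≤ k ∧ x = y + d

lemma TorusClose.mono {k k' : ℕ} {x y : ZMod n} (hk : k ≤ k') (h : TorusClose k x y) :
    TorusClose k' x y :=
  let ⟨d, hd, e⟩ := h
  ⟨d, hd.trans (by exact_mod_cast hk), e⟩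

lemma TorusClose.symm {k : ℕ} {x y : ZMod n} (h : TorusClose k x y) : TorusClose k y x := by
  obtain ⟨d, hd, rfl⟩ := h
  exact ⟨-d, by rwa [abs_neg], by push_cast; ring⟩

lemma TorusClose.trans {k k' : ℕ} {x y z : ZMod n} (h : TorusClose k x y)
    (h' : TorusClose k' y z) : TorusClose (k + k') x z := by
  obtain ⟨d, hd, rfl⟩ := h
  obtain ⟨d', hd', rfl⟩ := h'
  refine ⟨d' + d, ?_, by push_cast; ring⟩
  push_cast
  linarith [abs_add_le d' d]

lemma torusClose_one_of_nbr {x y : ZMod n} (h : nbr n x y) : TorusClose 1 x y := by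
  rcases h with rfl | rfl | rfl
  · exact ⟨0, by simp, by simp⟩
  · exact ⟨1, by simp, by simp⟩
  · exact ⟨-1, by simp, by push_cast; ring⟩

lemma torusClose_three_of_nbr_half {m : ℕ} [NeZero n] (hn : n = 2 * m) {x y : ZMod n}
    (h : nbr m ((x.val / 2 : ℕ) : ZMod m) ((y.val / 2 : ℕ) : ZMod m)) : TorusClose 3 x y := by
  subst hn
  obtain ⟨e, he, hxy⟩ := torusClose_one_of_nbr h
  obtain ⟨t, ht⟩ : (m : ℤ) ∣ (y.val / 2 : ℕ) + e - (x.val / 2 : ℕ) := by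
    rw [← ZMod.intCast_eq_intCast_iff_dvd_sub]
    simpa only [Int.cast_add, Int.cast_natCast] using hxy
  have hx := Nat.div_add_mod x.val 2
  have hy := Nat.div_add_mod y.val 2
  have hmt : (2 * m * t : ℤ) = 2 * (m * t) := by ring
  rw [abs_le] at he
  -- doubling `x / 2 ≡ y / 2 + e (mod m)` and restoring the parities of `x` and `y`
  refine ⟨2 * e + (x.val % 2 : ℕ) - (y.val % 2 : ℕ), by rw [abs_le]; push_cast; omega, ?_⟩
  have hxd : ((x.val : ℤ) : ZMod (2 * m)) =
      ((y.val + (2 * e + (x.val % 2 : ℕ) - (y.val % 2 : ℕ)) : ℤ) : ZMod (2 * m)) := by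
    rw [ZMod.intCast_eq_intCast_iff_dvd_sub]
    exact ⟨t, by push_cast at ht ⊢; omega⟩
  simpa using hxd

lemma TorusClose.eq_of_val_mod_eq {c k : ℕ} [NeZero n] (hc : c ∣ n) (hk : k < c)
    {x y : ZMod n} (h : TorusClose k x y) (hxy : x.val % c = y.val % c) : x = y := by
  obtain ⟨d, hd, rfl⟩ := h
  suffices d = 0 by simp [this]
  refine Int.eq_zero_of_abs_lt_dvd (m := c) ?_ (by omega)
  -- reducing modulo `c`, the hypothesis `hxy` reads `(y : ZMod c) + d = y`
  rw [← ZMod.natCast_eq_natCast_iff', ← ZMod.cast_eq_val, ← ZMod.cast_eq_val,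
    ← ZMod.castHom_apply (h := hc), ← ZMod.castHom_apply (h := hc), map_add,
    map_intCast] at hxy
  simpa [ZMod.intCast_zmod_eq_zero_iff_dvd] using hxy

end TorusClose

lemma torusClose_of_NLrel_or_ILrel {l : ℕ} (hl : 4 ≤ l) {I J : ZMod (2 ^ l) × ZMod (2 ^ l)}
    (h : NLrel (2 ^ l) I J ∨ ILrel l I J) : TorusClose 3 I.1 J.1 ∧ TorusClose 3 I.2 J.2 := by
  have hn : 2 ^ l = 2 * 2 ^ (l - 1) := by
    rw [← pow_succ']
    congr 1
    omega
  rcases h with ⟨h1, h2⟩ | ⟨-, rfl | ⟨h1, h2⟩⟩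
  · exact ⟨(torusClose_one_of_nbr h1).mono (by norm_num),
      (torusClose_one_of_nbr h2).mono (by norm_num)⟩
  · omega
  · exact ⟨torusClose_three_of_nbr_half hn h1, torusClose_three_of_nbr_half hn h2⟩

theorem NLrel_or_ILrel_disjoint {l : ℕ} (hl : 4 ≤ l) {J J' : ZMod (2 ^ l) × ZMod (2 ^ l)}
    (hne : J ≠ J') (hmod1 : J.1.val % 8 = J'.1.val % 8) (hmod2 : J.2.val % 8 = J'.2.val % 8)
    (I : ZMod (2 ^ l) × ZMod (2 ^ l)) :
    ¬((NLrel (2 ^ l) I J ∨ ILrel l I J) ∧ (NLrel (2 ^ l) I J' ∨ ILrel l I J')) := by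
  rintro ⟨h, h'⟩
  obtain ⟨c1, c2⟩ := torusClose_of_NLrel_or_ILrel hl h
  obtain ⟨c1', c2'⟩ := torusClose_of_NLrel_or_ILrel hl h'
  have h8 : 8 ∣ 2 ^ l := Nat.pow_dvd_pow 2 (by omega : 3 ≤ l)
  exact hne (Prod.ext ((c1.symm.trans c1').eq_of_val_mod_eq h8 (by norm_num) hmod1)
    ((c2.symm.trans c2').eq_of_val_mod_eq h8 (by norm_num) hmod2))

namespace Matrix

variable {ι β κ α : Type*} [Fintype ι] [NonUnitalNonAssocSemiring α] {box : ι → β}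
  {r : β → β → Prop} {A : Matrix ι ι α}

lemma mul_apply_eq_zero_of_not_rel (hA : ∀ p q, ¬ r (box p) (box q) → A p q = 0)
    {R : Matrix ι κ α} {B : β} (hR : ∀ q k, box q ≠ B → R q k = 0) {p : ι}
    (hp : ¬ r (box p) B) (k : κ) : (A * R) p k = 0 := by
  rw [mul_apply]
  refine Finset.sum_eq_zero fun q _ => ?_
  by_cases hq : box q = B
  · rw [hA p q (hq ▸ hp), zero_mul]
  · rw [hR q k hq, mul_zero]

lemma mul_sum_apply_eq_of_not_rel (hA : ∀ p q, ¬ r (box p) (box q) → A p q = 0)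
    {R : β → Matrix ι κ α} (hR : ∀ B q k, box q ≠ B → R B q k = 0) {S : Finset β} {J : β}
    (hJ : J ∈ S) {p : ι} (hp : ∀ B ∈ S, B ≠ J → ¬ r (box p) B) (k : κ) :
    (A * ∑ B ∈ S, R B) p k = (A * R J) p k := by
  rw [Matrix.mul_sum, sum_apply]
  exact Finset.sum_eq_single_of_mem J hJ fun B hB hBJ =>
    mul_apply_eq_zero_of_not_rel hA (hR B) (hp B hB hBJ) k

end Matrix

theorem stmt_12_general (LM l : ℕ) (hl : 4 ≤ l)
    (J J' : ZMod (2 ^ l) × ZMod (2 ^ l)) (hne : J ≠ J')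
    (hmod1 : J.1.val % 8 = J'.1.val % 8) (hmod2 : J.2.val % 8 = J'.2.val % 8) :
    (∀ I : ZMod (2 ^ l) × ZMod (2 ^ l),
        ¬((NLrel (2 ^ l) I J ∨ ILrel l I J) ∧ (NLrel (2 ^ l) I J' ∨ ILrel l I J'))) ∧
    ∀ (κ : Type) [Fintype κ]
      (A : Matrix (ZMod (2 ^ LM) × ZMod (2 ^ LM)) (ZMod (2 ^ LM) × ZMod (2 ^ LM)) ℝ),
      (∀ p q, ¬(NLrel (2 ^ l) (gridBox LM l p) (gridBox LM l q) ∨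
          ILrel l (gridBox LM l p) (gridBox LM l q)) → A p q = 0) →
      ∀ (R : (ZMod (2 ^ l) × ZMod (2 ^ l)) → Matrix (ZMod (2 ^ LM) × ZMod (2 ^ LM)) κ ℝ),
      (∀ B p k, gridBox LM l p ≠ B → R B p k = 0) →
      ∀ (S : Finset (ZMod (2 ^ l) × ZMod (2 ^ l))),
      (∀ B ∈ S, B.1.val % 8 = J.1.val % 8 ∧ B.2.val % 8 = J.2.val % 8) →
      J ∈ S →
      ∀ (p : ZMod (2 ^ LM) × ZMod (2 ^ LM)),
        (NLrel (2 ^ l) (gridBox LM l p) J ∨ ILrel l (gridBox LM l p) J) →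
        ∀ k : κ, (A * ∑ B ∈ S, R B) p k = (A * R J) p k := by
  refine ⟨NLrel_or_ILrel_disjoint hl hne hmod1 hmod2, ?_⟩
  intro κ _ A hA R hR S hS hJS p hp k
  refine Matrix.mul_sum_apply_eq_of_not_rel (r := fun I J => NLrel (2 ^ l) I J ∨ ILrel l I J)
    hA hR hJS (fun B hB hBJ hpB => ?_) k
  exact NLrel_or_ILrel_disjoint hl (Ne.symm hBJ) (hS B hB).1.symm (hS B hB).2.symm _ ⟨hp, hpB⟩

/-- If `J ≠ J'` are level-`l` boxes (`l ≥ 4`) with coordinates congruent modulo `8`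
(members of the same class `S_{pq}`), then `NL(J) ∪ IL(J)` and `NL(J') ∪ IL(J')` are
disjoint.  Consequently, for a matrix `A` on the grid whose block `A(I, J)` is nonzero
only when `I ∈ NL(J) ∪ IL(J)`, and for test matrices `R_B` supported on the grid points of
boxes `B` from one class `S_{pq}`, the product `A · R_J` can be read off from the single
application of `A` to `∑_B R_B`, on all rows belonging to boxes in `NL(J) ∪ IL(J)`. -/
theorem stmt_12 (LM l : ℕ) (hl : 4 ≤ l) (hlLM : l ≤ LM)
    (J J' : ZMod (2 ^ l) × ZMod (2 ^ l)) (hne : J ≠ J')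
    (hmod1 : J.1.val % 8 = J'.1.val % 8) (hmod2 : J.2.val % 8 = J'.2.val % 8) :
    (∀ I : ZMod (2 ^ l) × ZMod (2 ^ l),
        ¬((NLrel (2 ^ l) I J ∨ ILrel l I J) ∧ (NLrel (2 ^ l) I J' ∨ ILrel l I J'))) ∧
    ∀ (κ : Type) [Fintype κ]
      (A : Matrix (ZMod (2 ^ LM) × ZMod (2 ^ LM)) (ZMod (2 ^ LM) × ZMod (2 ^ LM)) ℝ),
      (∀ p q, ¬(NLrel (2 ^ l) (gridBox LM l p) (gridBox LM l q) ∨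
          ILrel l (gridBox LM l p) (gridBox LM l q)) → A p q = 0) →
      ∀ (R : (ZMod (2 ^ l) × ZMod (2 ^ l)) → Matrix (ZMod (2 ^ LM) × ZMod (2 ^ LM)) κ ℝ),
      (∀ B p k, gridBox LM l p ≠ B → R B p k = 0) →
      ∀ (S : Finset (ZMod (2 ^ l) × ZMod (2 ^ l))),
      (∀ B ∈ S, B.1.val % 8 = J.1.val % 8 ∧ B.2.val % 8 = J.2.val % 8) →
      J ∈ S →
      ∀ (p : ZMod (2 ^ LM) × ZMod (2 ^ LM)),
        (NLrel (2 ^ l) (gridBox LM l p) J ∨ ILrel l (gridBox LM l p) J) →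
        ∀ k : κ, (A * ∑ B ∈ S, R B) p k = (A * R J) p k :=
  stmt_12_general LM l hl J J' hne hmod1 hmod2
end
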